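/- arXiv:1309.3467 — 2 statements merged into one kernel-verified Lean document; each statement's English description precedes it below -/
import Mathlib

section
/- Let M = 2^λ with λ ≥ 3, let S be the M-PSK signal set, let k ∈ {1,…,M/2−1} be odd, and let s = sin(kπ/M)·exp(iπ/M) or s = (1/sin(kπ/M))·exp(iπ/M). Then the vital subgraph G_s^V of the singularity removal graph G_s admits a proper vertex coloring with 4 colors (it is 4-colorable). -/
noncomputable section

/-- The equivalence relation on cells `(a,b)` identifying cells with the same
effective constellation point `S a + s * S b`. Its classes are the
singularity removal constraints. -/
def fadeSetoid (M : ℕ) (S : Fin M → ℂ) (s : ℂ) : Setoid (Fin M × Fin M) where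
  r p q := S p.1 + s * S p.2 = S q.1 + s * S q.2
  iseqv := ⟨fun _ => rfl, fun h => h.symm, fun h₁ h₂ => h₁.trans h₂⟩

/-- The singularity removal graph: vertices are the singularity removal
constraints (equivalence classes); two distinct classes are adjacent iff they
contain cells sharing a row or a column. -/
def srg (M : ℕ) (S : Fin M → ℂ) (s : ℂ) :
    SimpleGraph (Quotient (fadeSetoid M S s)) where
  Adj u v := u ≠ v ∧ ∃ p q : Fin M × Fin M,
      Quotient.mk (fadeSetoid M S s) p = u ∧ Quotient.mk (fadeSetoid M S s) q = v ∧
      (p.1 = q.1 ∨ p.2 = q.2)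
  symm := by
    constructor
    rintro u v ⟨hne, p, q, hp, hq, h⟩
    exact ⟨hne.symm, q, p, hq, hp, h.imp Eq.symm Eq.symm⟩
  loopless := by
    constructor
    rintro u ⟨hne, -⟩
    exact hne rfl

/-- A Latin square of order `M` with symbols in `Fin t`. -/
def IsLatinSquare {M t : ℕ} (f : Fin M × Fin M → Fin t) : Prop :=
  (∀ a : Fin M, Function.Injective fun b => f (a, b)) ∧
  (∀ b : Fin M, Function.Injective fun a => f (a, b))

/-- `f` removes the fade state `s`: it is constant on every singularity
removal constraint. -/
def RemovesFadeState (M : ℕ) (S : Fin M → ℂ) (s : ℂ) {t : ℕ}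
    (f : Fin M × Fin M → Fin t) : Prop :=
  ∀ p q : Fin M × Fin M, S p.1 + s * S p.2 = S q.1 + s * S q.2 → f p = f q

/-- The set of singularity removal constraints containing at least two cells. -/
def vitalSet (M : ℕ) (S : Fin M → ℂ) (s : ℂ) : Set (Quotient (fadeSetoid M S s)) :=
  {c | ∃ p q : Fin M × Fin M, p ≠ q ∧
    Quotient.mk (fadeSetoid M S s) p = c ∧ Quotient.mk (fadeSetoid M S s) q = c}

/-- The vital subgraph: the induced subgraph of the singularity removal graph
on the classes of size at least two. -/
def vital (M : ℕ) (S : Fin M → ℂ) (s : ℂ) : SimpleGraph (vitalSet M S s) :=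
  (srg M S s).induce (vitalSet M S s)

/-- The `M`-PSK signal set `S m = exp (i (2m+1) π / M)`. -/
def PSK (M : ℕ) : Fin M → ℂ :=
  fun m => Complex.exp (Complex.I * (2 * (m : ℕ) + 1) * (Real.pi : ℂ) / (M : ℂ))

/-- The square `n²`-QAM signal set: `S (k + l n) = (−n+1+2l) + (−n+1+2k) i`. -/
def QAM (n : ℕ) : Fin (n ^ 2) → ℂ := fun j =>
  (((2 * ((j : ℕ) / n) + 1 : ℤ) - (n : ℤ) : ℤ) : ℂ) +
    (((2 * ((j : ℕ) % n) + 1 : ℤ) - (n : ℤ) : ℤ) : ℂ) * Complex.I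

/-!
Let `M = 2 ^ (l + 1)`, `n = 2 ^ l`, and let `ψ` be the standard additive character of `ZMod M`,
so that `PSK M m = exp (iπ/M) ψ m` and `ψ (t + n) = -ψ t`. For odd `k` there is an integer `e`
with `2 sin (kπ/M) exp (iπ/M) = ψ e - ψ (e + k)`, and clearing denominators turns the relation
`S a + s S b = S a' + s S b'` into `2 ψ x + ψ v - ψ (v + k) = 2 ψ x' + ψ v' - ψ (v' + k)`, with
`(x, v) = (a, b + e)` for the first value of `s` and `(x, v) = (b + 1, a + e)` for the second.

Since `X ^ n + 1` is the minimal polynomial of `ψ 1`, a multiset of `M`-th roots of unity with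
zero sum is invariant under `t ↦ t + n`. Counting multiplicities then shows that two distinct
solutions are `(w, w + n)` and `(w + k, w)` for some `w`. So every vital constraint consists of two
cells determined by a base point `w`, and adjacent constraints have base points differing by `±n`
or `±k`. The circulant graph on `ZMod M` with jumps `n` and `k` is 4-coloured by the pair
(half of `ZMod M` containing `w`, parity of `w`).
-/

open Complex Polynomial SimpleGraph Function

theorem Polynomial.cyclotomic_two_pow_succ (R : Type*) [Ring R] (l : ℕ) :
    cyclotomic (2 ^ (l + 1)) R = X ^ 2 ^ l + 1 := by
  have h := cyclotomic_prime_pow_mul_X_pow_sub_one ℤ 2 l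
  rw [show (X : ℤ[X]) ^ 2 ^ (l + 1) - 1 = (X ^ 2 ^ l + 1) * (X ^ 2 ^ l - 1) by ring] at h
  have hℤ : cyclotomic (2 ^ (l + 1)) ℤ = X ^ 2 ^ l + 1 :=
    mul_right_cancel₀ (X_pow_sub_C_ne_zero (Nat.two_pow_pos l) 1) (by simpa using h)
  rw [← map_cyclotomic_int, hℤ]
  simp

-- `X ^ 2 ^ l + 1` is the minimal polynomial of `ω`, so `P = Q + X ^ 2 ^ l * Q` with `deg Q < 2 ^ l`
theorem Polynomial.coeff_add_two_pow_eq_of_aeval_eq_zero {K : Type*} [Field K] [CharZero K]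
    {l : ℕ} {ω : K} (hω : IsPrimitiveRoot ω (2 ^ (l + 1))) {P : ℤ[X]} (hP : aeval ω P = 0)
    (hdeg : P.natDegree < 2 ^ (l + 1)) {i : ℕ} (hi : i < 2 ^ l) :
    P.coeff (i + 2 ^ l) = P.coeff i := by
  obtain ⟨Q, rfl⟩ : X ^ 2 ^ l + 1 ∣ P := by
    rw [← cyclotomic_two_pow_succ, cyclotomic_eq_minpoly hω (by positivity)]
    exact minpoly.isIntegrallyClosed_dvd (hω.isIntegral (by positivity)) hP
  have hQ : Q.natDegree < 2 ^ l := by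
    rcases eq_or_ne Q 0 with rfl | hQ0
    · simp
    have hmonic : (X ^ 2 ^ l + 1 : ℤ[X]).Monic := monic_X_pow_add_C 1 (by positivity)
    rw [hmonic.natDegree_mul' (by simpa [hmonic.leadingCoeff] using hQ0), ← C_1,
      natDegree_X_pow_add_C, pow_succ] at hdeg
    omega
  rw [add_mul, one_mul, coeff_add, coeff_add, coeff_X_pow_mul, coeff_X_pow_mul', if_neg (by omega),
    coeff_eq_zero_of_natDegree_lt (by omega : Q.natDegree < i + 2 ^ l), add_zero, zero_add]

namespace ZMod

lemma stdAddChar_eq_pow_val {N : ℕ} [NeZero N] (t : ZMod N) :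
    stdAddChar t = exp (2 * Real.pi * I / N) ^ t.val := by
  rw [stdAddChar_apply, toCircle_apply, ← Complex.exp_nat_mul]
  ring_nf

lemma stdAddChar_one {M : ℕ} [NeZero M] : stdAddChar (1 : ZMod M) = exp (I * Real.pi / M) ^ 2 := by
  rw [← Int.cast_one, stdAddChar_coe, sq, ← exp_add]
  ring_nf

theorem eq_of_stdAddChar_sub_stdAddChar_add_eq {N : ℕ} [NeZero N] {κ v v' : ZMod N} (hκ : κ ≠ 0)
    (h : stdAddChar v - stdAddChar (v + κ) = stdAddChar v' - stdAddChar (v' + κ)) : v = v' := by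
  have hκ1 : stdAddChar κ ≠ 1 := by
    rwa [← AddChar.map_zero_eq_one (stdAddChar (N := N)), (injective_stdAddChar (N := N)).ne_iff]
  refine injective_stdAddChar (mul_right_cancel₀ (sub_ne_zero.mpr hκ1) ?_)
  simp only [AddChar.map_add_eq_mul] at h
  linear_combination -h

variable {l : ℕ}

lemma natCast_two_pow_add_self : ((2 ^ l : ℕ) : ZMod (2 ^ (l + 1))) + (2 ^ l : ℕ) = 0 := by
  rw [← Nat.cast_add, ← two_mul, ← pow_succ', natCast_self]

lemma stdAddChar_two_pow : stdAddChar ((2 ^ l : ℕ) : ZMod (2 ^ (l + 1))) = -1 := by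
  rw [stdAddChar_apply, toCircle_natCast, ← exp_pi_mul_I]
  congr 1
  push_cast
  field_simp
  ring

lemma ne_natCast_two_pow_of_add_self_ne_zero {κ : ZMod (2 ^ (l + 1))} (hκκ : κ + κ ≠ 0) :
    κ ≠ (2 ^ l : ℕ) := by
  rintro rfl
  exact hκκ natCast_two_pow_add_self

theorem count_add_two_pow_eq_of_sum_stdAddChar_eq_zero {T : Multiset (ZMod (2 ^ (l + 1)))}
    (hT : (T.map stdAddChar).sum = 0) (t : ZMod (2 ^ (l + 1))) :
    T.count (t + (2 ^ l : ℕ)) = T.count t := by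
  set P : ℤ[X] := ∑ u, C (T.count u : ℤ) * X ^ u.val
  have hcoeff (u : ZMod (2 ^ (l + 1))) : P.coeff u.val = T.count u := by
    simp only [P, finsetSum_coeff, coeff_C_mul_X_pow]
    rw [Finset.sum_eq_single u (fun v _ hv => if_neg fun h => hv (val_injective _ h).symm)
      (by simp)]
    simp
  have hP : aeval (exp (2 * Real.pi * I / (2 ^ (l + 1) : ℕ))) P = 0 := by
    simp only [P, map_sum, map_mul, map_pow, aeval_X, map_natCast, ← stdAddChar_eq_pow_val, ← hT,
      Finset.sum_multiset_map_count, nsmul_eq_mul]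
    refine (Finset.sum_subset (Finset.subset_univ T.toFinset) fun u _ hu => ?_).symm
    rw [Multiset.count_eq_zero.mpr (by simpa using hu), Nat.cast_zero, zero_mul]
  have hdeg : P.natDegree < 2 ^ (l + 1) :=
    (natDegree_sum_le_of_forall_le _ _ fun u _ =>
      (natDegree_C_mul_X_pow_le _ _).trans (Nat.le_sub_one_of_lt u.val_lt)).trans_lt
        (Nat.sub_lt (by positivity) one_pos)
  have hlow (u : ZMod (2 ^ (l + 1))) (hu : u.val < 2 ^ l) :
      T.count (u + (2 ^ l : ℕ)) = T.count u := by
    have hval : (u + (2 ^ l : ℕ)).val = u.val + 2 ^ l := by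
      rw [val_add, val_natCast_of_lt (by omega), Nat.mod_eq_of_lt (by omega)]
    have h := coeff_add_two_pow_eq_of_aeval_eq_zero (isPrimitiveRoot_exp _ (NeZero.ne _)) hP hdeg hu
    rw [← hval, hcoeff, hcoeff] at h
    exact_mod_cast h
  by_cases ht : t.val < 2 ^ l
  · exact hlow t ht
  · have hu : (t + (2 ^ l : ℕ)).val < 2 ^ l := by
      have := t.val_lt
      have := pow_succ' 2 l
      rw [val_add, val_natCast_of_lt (by omega), Nat.mod_eq_sub_mod (by omega),
        Nat.mod_eq_of_lt (by omega)]
      omega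
    have := hlow _ hu
    rwa [add_assoc, natCast_two_pow_add_self, add_zero, eq_comm] at this

theorem eq_of_two_mul_stdAddChar_add_sub_eq {κ x x' v v' : ZMod (2 ^ (l + 1))}
    (hκκ : κ + κ ≠ 0) (hne : (x, v) ≠ (x', v'))
    (h : 2 * stdAddChar x + stdAddChar v - stdAddChar (v + κ) =
      2 * stdAddChar x' + stdAddChar v' - stdAddChar (v' + κ)) :
    (v = x + (2 ^ l : ℕ) ∧ x' = x + κ ∧ v' = x) ∨
      (x = v + κ ∧ x' = v ∧ v' = v + (2 ^ l : ℕ)) := by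
  have hκ0 : κ ≠ 0 := by
    rintro rfl
    exact hκκ (add_zero 0)
  have hxx : x ≠ x' := by
    rintro rfl
    exact hne (Prod.ext rfl (eq_of_stdAddChar_sub_stdAddChar_add_eq hκ0 (by linear_combination h)))
  have hψn := stdAddChar_two_pow (l := l)
  have hnn := natCast_two_pow_add_self (l := l)
  have hper := @count_add_two_pow_eq_of_sum_stdAddChar_eq_zero l
  generalize ((2 ^ l : ℕ) : ZMod (2 ^ (l + 1))) = n at *
  have hn0 : n ≠ 0 := by
    rintro rfl
    norm_num [AddChar.map_zero_eq_one] at hψn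
  have hshift (t : ZMod (2 ^ (l + 1))) : stdAddChar (t + n) = -stdAddChar t := by
    rw [AddChar.map_add_eq_mul, hψn, mul_neg_one]
  -- `h` says that the roots of unity indexed by `x, x, x' + n, x' + n` and `U` sum to zero
  set U : Multiset (ZMod (2 ^ (l + 1))) := {v, v + κ + n, v' + n, v' + κ}
  have hT := hper (T := x ::ₘ x ::ₘ (x' + n) ::ₘ (x' + n) ::ₘ U) (by
    simp only [U, Multiset.insert_eq_cons, Multiset.map_cons, Multiset.map_singleton,
      Multiset.sum_cons, Multiset.sum_singleton, hshift]
    linear_combination h)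
  have hxn : x + n ≠ x := by simpa using hn0
  have hx'n : x' + n ≠ x' := by simpa using hn0
  -- `x` and `x' + n` occur at least twice, and so do `x + n` and `x'`, which only `U` can contain
  have hU₁ : 2 + (if x = x' + n then 2 else 0) ≤ U.count (x + n) := by
    have := hT x
    simp only [Multiset.count_cons, if_neg hxn, add_left_inj, if_neg hxx, ↓reduceIte] at this
    split_ifs at this ⊢ <;> omega
  have hU₂ : 2 ≤ U.count x' := by
    have := hT x'
    simp only [Multiset.count_cons, if_neg hx'n.symm, if_neg (Ne.symm hxx), ↓reduceIte] at this
    split_ifs at this <;> omega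
  -- so two of the four points of `U` equal `x + n` and the other two equal `x'`
  simp only [U, Multiset.insert_eq_cons, Multiset.count_cons, Multiset.count_singleton] at hU₁ hU₂
  clear_value U
  clear hT hper hshift hψn h hne
  grind

end ZMod

theorem SimpleGraph.circulantGraph_half_odd_colorable_four {M N k : ℕ} [NeZero M] (hMN : M = 2 * N)
    (hk : Odd k) : (circulantGraph {(N : ZMod M), (k : ZMod M)}).Colorable 4 := by
  let π := ZMod.castHom (show 2 ∣ M from hMN ▸ dvd_mul_right 2 N) (ZMod 2)
  have hhalf (z : ZMod M) : (z + N).val < N ↔ ¬z.val < N := by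
    have := z.val_lt
    rw [ZMod.val_add, ZMod.val_natCast_of_lt (by omega)]
    by_cases h : z.val + N < M
    · rw [Nat.mod_eq_of_lt h]; omega
    · rw [Nat.mod_eq_sub_mod (by omega), Nat.mod_eq_of_lt (by omega)]; omega
  have hparity (z : ZMod M) : π (z + k) ≠ π z := by
    rw [map_add, map_natCast, ZMod.natCast_eq_one_iff_odd.mpr hk]
    simp
  let col (z : ZMod M) : Bool × ZMod 2 := (decide (z.val < N), π z)
  have hcol (z d : ZMod M) (hd : d ∈ ({(N : ZMod M), (k : ZMod M)} : Set (ZMod M))) :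
      col (z + d) ≠ col z := by
    rcases hd with rfl | rfl <;> intro hc
    · have := congrArg Prod.fst hc
      simp only [col, decide_eq_decide, hhalf] at this
      tauto
    · exact hparity z (congrArg Prod.snd hc)
  have hadj (u v : ZMod M) (h : u - v ∈ ({(N : ZMod M), (k : ZMod M)} : Set (ZMod M))) :
      col u ≠ col v := by
    simpa using hcol v (u - v) h
  simpa using (Coloring.mk (G := circulantGraph {(N : ZMod M), (k : ZMod M)}) col
    fun {u v} ⟨_, h⟩ => h.elim (hadj u v) fun h => (hadj v u h).symm).colorable

theorem exists_ne_of_mk_mem_vitalSet {M : ℕ} {S : Fin M → ℂ} {s : ℂ} {p : Fin M × Fin M}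
    (hp : ⟦p⟧ ∈ vitalSet M S s) : ∃ r ≠ p, S p.1 + s * S p.2 = S r.1 + s * S r.2 := by
  obtain ⟨p₁, p₂, h12, h1, h2⟩ := hp
  by_cases h : p₁ = p
  · exact ⟨p₂, h ▸ h12.symm, Quotient.exact (h2.trans (h ▸ h1).symm).symm⟩
  · exact ⟨p₁, h, Quotient.exact h1.symm⟩

theorem vital_colorable_of_pairs {M : ℕ} {S : Fin M → ℂ} {s : ℂ} {A : Type*} [AddCommGroup A]
    {ι : Fin M → A} (hι : Injective ι) {C R D : A} (hRD : R ≠ D) {c : ℕ}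
    (hcol : (circulantGraph {R, D}).Colorable c)
    (hpair : ∀ p q : Fin M × Fin M, p ≠ q → S p.1 + s * S p.2 = S q.1 + s * S q.2 → ∃ w,
      ((ι p.1, ι p.2) = (w, w + C) ∧ (ι q.1, ι q.2) = (w + R, w + C + D)) ∨
      ((ι p.1, ι p.2) = (w + R, w + C + D) ∧ (ι q.1, ι q.2) = (w, w + C))) :
    (vital M S s).Colorable c := by
  classical
  -- the `w` of the pair `{(w, w + C), (w + R, w + C + D)}` through `p`, well defined as `R ≠ D`
  let base (p : Fin M × Fin M) : A := if ι p.2 = ι p.1 + C then ι p.1 else ι p.1 - R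
  have hbase (p q : Fin M × Fin M) (hpq : p ≠ q) (hrel : S p.1 + s * S p.2 = S q.1 + s * S q.2) :
      (ι p.1 = base p ∧ ι p.2 = base p + C ∧ ι q.1 = base p + R ∧ ι q.2 = base p + C + D ∨
       ι p.1 = base p + R ∧ ι p.2 = base p + C + D ∧ ι q.1 = base p ∧ ι q.2 = base p + C) ∧
      base q = base p := by
    obtain ⟨w, h | h⟩ := hpair p q hpq hrel <;> simp only [Prod.mk.injEq] at h <;>
      simp only [base] <;> grind
  let f : Quotient (fadeSetoid M S s) → A := Quotient.lift base fun p q hrel => by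
    by_cases hpq : p = q
    · rw [hpq]
    · exact (hbase p q hpq hrel).2.symm
  refine Colorable.of_hom ⟨fun u => f u.1, ?_⟩ hcol
  rintro ⟨u, hu⟩ ⟨v, hv⟩ ⟨huv, p, q, rfl, rfl, hpq⟩
  obtain ⟨r, hrp, hr⟩ := exists_ne_of_mk_mem_vitalSet hu
  obtain ⟨t, htq, ht⟩ := exists_ne_of_mk_mem_vitalSet hv
  have hp := (hbase p r hrp.symm hr).1
  have hq := (hbase q t htq.symm ht).1
  have hne : base p ≠ base q := by
    intro h
    have : q = p ∨ q = r := by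
      simp only [Prod.ext_iff, ← hι.eq_iff]
      grind
    rcases this with rfl | rfl
    · exact huv rfl
    · exact huv (Quotient.sound hr)
  change (circulantGraph {R, D}).Adj (base p) (base q)
  simp only [circulantGraph_adj, Set.mem_insert_iff, Set.mem_singleton_iff]
  refine ⟨hne, ?_⟩
  rcases hpq with h | h <;> rw [← hι.eq_iff] at h <;> grind

theorem Complex.two_mul_sin_mul_exp (θ φ : ℝ) :
    2 * (Real.sin θ : ℂ) * exp (φ * I) =
      exp ((Real.pi / 2 + φ - θ) * I) - exp ((Real.pi / 2 + φ + θ) * I) := by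
  rw [show (Real.pi / 2 + φ - θ : ℂ) * I = Real.pi / 2 * I + φ * I + -θ * I by ring,
    show (Real.pi / 2 + φ + θ : ℂ) * I = Real.pi / 2 * I + φ * I + θ * I by ring,
    exp_add, exp_add, exp_add, exp_add, exp_pi_div_two_mul_I, ofReal_sin, Complex.sin]
  ring

theorem two_mul_sin_mul_exp_eq_stdAddChar_sub {M k : ℕ} [NeZero M] {e : ℤ}
    (he : 4 * e = M + 2 - 2 * k) :
    2 * (Real.sin (k * Real.pi / M) : ℂ) * exp (I * Real.pi / M) =
      ZMod.stdAddChar (e : ZMod M) - ZMod.stdAddChar ((e + k : ℤ) : ZMod M) := by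
  have hM : (M : ℂ) ≠ 0 := Nat.cast_ne_zero.mpr (NeZero.ne M)
  have he' : (4 * e : ℂ) = M + 2 - 2 * k := by exact_mod_cast he
  rw [ZMod.stdAddChar_coe, ZMod.stdAddChar_coe, show I * Real.pi / M = ((Real.pi / M : ℝ) : ℂ) * I
    by push_cast; ring, two_mul_sin_mul_exp]
  congr 2 <;> push_cast <;> field_simp <;> linear_combination -he'

theorem PSK_eq_mul_stdAddChar {M : ℕ} [NeZero M] (m : Fin M) :
    PSK M m = exp (I * Real.pi / M) * ZMod.stdAddChar ((m : ℕ) : ZMod M) := by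
  rw [PSK, ZMod.stdAddChar_apply, ZMod.toCircle_natCast, ← exp_add]
  ring_nf

theorem PSK_add_mul_PSK_eq_iff {M : ℕ} [NeZero M] {s : ℂ} {a b a' b' : Fin M} :
    PSK M a + s * PSK M b = PSK M a' + s * PSK M b' ↔
      ZMod.stdAddChar ((a : ℕ) : ZMod M) + s * ZMod.stdAddChar ((b : ℕ) : ZMod M) =
        ZMod.stdAddChar ((a' : ℕ) : ZMod M) + s * ZMod.stdAddChar ((b' : ℕ) : ZMod M) := by
  simp only [PSK_eq_mul_stdAddChar, mul_left_comm s, ← mul_add]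
  exact mul_right_inj' (exp_ne_zero _)

theorem injective_natCast_fin_zmod (M : ℕ) : Injective fun m : Fin M => ((m : ℕ) : ZMod M) :=
  fun a b h => Fin.ext (CharP.natCast_injOn_Iio (ZMod M) M a.2 b.2 h)

section PSKPairs

open ZMod

variable {l c : ℕ} {s : ℂ} {κ e : ZMod (2 ^ (l + 1))}

theorem vital_PSK_colorable_of_two_mul_eq_sub (hκκ : κ + κ ≠ 0)
    (hcol : (circulantGraph {((2 ^ l : ℕ) : ZMod (2 ^ (l + 1))), κ}).Colorable c)
    (hs : 2 * s = stdAddChar e - stdAddChar (e + κ)) :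
    (vital (2 ^ (l + 1)) (PSK (2 ^ (l + 1))) s).Colorable c := by
  rw [Set.pair_comm] at hcol
  refine vital_colorable_of_pairs (injective_natCast_fin_zmod _)
    (C := ((2 ^ l : ℕ) : ZMod (2 ^ (l + 1))) - e) (ne_natCast_two_pow_of_add_self_ne_zero hκκ) hcol
    fun p q hpq hrel => ?_
  rw [PSK_add_mul_PSK_eq_iff] at hrel
  have hnn := natCast_two_pow_add_self (l := l)
  obtain ⟨h₁, h₂, h₃⟩ | ⟨h₁, h₂, h₃⟩ := eq_of_two_mul_stdAddChar_add_sub_eq hκκ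
    (x := (p.1 : ZMod (2 ^ (l + 1)))) (v := (p.2 : ZMod (2 ^ (l + 1))) + e)
    (x' := (q.1 : ZMod (2 ^ (l + 1)))) (v' := (q.2 : ZMod (2 ^ (l + 1))) + e)
    (by
      intro h
      simp only [Prod.mk.injEq, add_left_inj] at h
      exact hpq (Prod.ext (injective_natCast_fin_zmod _ h.1) (injective_natCast_fin_zmod _ h.2)))
    (by
      simp only [AddChar.map_add_eq_mul] at hs ⊢
      linear_combination 2 * hrel - (stdAddChar (p.2 : ZMod (2 ^ (l + 1))) -
        stdAddChar (q.2 : ZMod (2 ^ (l + 1)))) * hs)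
  · exact ⟨_, Or.inl ⟨Prod.ext rfl (by linear_combination h₁),
      Prod.ext h₂ (by linear_combination h₃ - hnn)⟩⟩
  · exact ⟨_, Or.inr ⟨Prod.ext h₁ (by linear_combination -hnn),
      Prod.ext h₂ (by linear_combination h₃)⟩⟩

theorem vital_PSK_colorable_of_mul_sub_eq (hκκ : κ + κ ≠ 0)
    (hcol : (circulantGraph {((2 ^ l : ℕ) : ZMod (2 ^ (l + 1))), κ}).Colorable c)
    (hs : s * (stdAddChar e - stdAddChar (e + κ)) = 2 * stdAddChar (1 : ZMod (2 ^ (l + 1)))) :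
    (vital (2 ^ (l + 1)) (PSK (2 ^ (l + 1))) s).Colorable c := by
  refine vital_colorable_of_pairs (injective_natCast_fin_zmod _)
    (C := e - 1 + ((2 ^ l : ℕ) : ZMod (2 ^ (l + 1))))
    (ne_natCast_two_pow_of_add_self_ne_zero hκκ).symm hcol fun p q hpq hrel => ?_
  rw [PSK_add_mul_PSK_eq_iff] at hrel
  have hnn := natCast_two_pow_add_self (l := l)
  obtain ⟨h₁, h₂, h₃⟩ | ⟨h₁, h₂, h₃⟩ := eq_of_two_mul_stdAddChar_add_sub_eq hκκ
    (x := (p.2 : ZMod (2 ^ (l + 1))) + 1) (v := (p.1 : ZMod (2 ^ (l + 1))) + e)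
    (x' := (q.2 : ZMod (2 ^ (l + 1))) + 1) (v' := (q.1 : ZMod (2 ^ (l + 1))) + e)
    (by
      intro h
      simp only [Prod.mk.injEq, add_left_inj] at h
      exact hpq (Prod.ext (injective_natCast_fin_zmod _ h.2) (injective_natCast_fin_zmod _ h.1)))
    (by
      simp only [AddChar.map_add_eq_mul] at hs ⊢
      linear_combination (stdAddChar e - stdAddChar e * stdAddChar κ) * hrel
        - (stdAddChar (p.2 : ZMod (2 ^ (l + 1))) -
          stdAddChar (q.2 : ZMod (2 ^ (l + 1)))) * hs)
  · exact ⟨_, Or.inl ⟨Prod.ext rfl (by linear_combination -h₁ - hnn),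
      Prod.ext (by linear_combination h₃ - h₁ - hnn) (by linear_combination h₂ - h₁ - hnn)⟩⟩
  · exact ⟨_, Or.inr ⟨Prod.ext (by linear_combination -h₃ - hnn)
      (by linear_combination h₁ - h₃ - hnn), Prod.ext rfl (by linear_combination h₂ - h₃ - hnn)⟩⟩

end PSKPairs

theorem Real.sin_natCast_mul_pi_div_pos {k M : ℕ} (hk : 0 < k) (hkM : k < M) :
    0 < Real.sin (k * Real.pi / M) := by
  have hk' : (0 : ℝ) < k := by exact_mod_cast hk
  have hkM' : (k : ℝ) < M := by exact_mod_cast hkM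
  refine Real.sin_pos_of_pos_of_lt_pi (div_pos (mul_pos hk' Real.pi_pos) (hk'.trans hkM')) ?_
  rw [div_lt_iff₀ (hk'.trans hkM')]
  nlinarith [Real.pi_pos]

theorem psk_vital_colorable_four_sin_odd_general (lam M k : ℕ)
    (hM : M = 2 ^ lam) (hk2 : k ≤ M / 2 - 1) (hkodd : k % 2 = 1)
    (s : ℂ)
    (hs : s = ((Real.sin (k * Real.pi / M) : ℝ) : ℂ) *
            Complex.exp (Complex.I * (Real.pi : ℂ) / (M : ℂ)) ∨
          s = ((1 / Real.sin (k * Real.pi / M) : ℝ) : ℂ) *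
            Complex.exp (Complex.I * (Real.pi : ℂ) / (M : ℂ))) :
    (vital M (PSK M) s).Colorable 4 := by
  obtain ⟨j, rfl⟩ : ∃ j, k = 2 * j + 1 := ⟨k / 2, by omega⟩
  obtain _ | _ | l := lam <;> subst hM
  · simp at hk2
  · simp at hk2
  have hpow := pow_succ 2 (l + 1)
  have hk : 2 * j + 1 < 2 ^ (l + 1) := by rw [hpow, Nat.mul_div_cancel] at hk2 <;> omega
  have hκκ : ((2 * j + 1 : ℕ) : ZMod (2 ^ (l + 1 + 1))) + (2 * j + 1 : ℕ) ≠ 0 := by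
    rw [← Nat.cast_add, Ne, ZMod.natCast_eq_zero_iff]
    exact Nat.not_dvd_of_pos_of_lt (by omega) (by omega)
  have hcol := circulantGraph_half_odd_colorable_four (M := 2 ^ (l + 1 + 1)) (N := 2 ^ (l + 1))
    (by rw [hpow, mul_comm]) (odd_two_mul_add_one j)
  have hδ := two_mul_sin_mul_exp_eq_stdAddChar_sub (M := 2 ^ (l + 1 + 1)) (k := 2 * j + 1)
    (e := 2 ^ l - j) (by push_cast; ring)
  rw [Int.cast_add, Int.cast_natCast] at hδ
  rcases hs with rfl | rfl
  · exact vital_PSK_colorable_of_two_mul_eq_sub hκκ hcol (by rw [← hδ]; ring)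
  · refine vital_PSK_colorable_of_mul_sub_eq (e := ((2 ^ l - j : ℤ) : ZMod (2 ^ (l + 1 + 1)))) hκκ
      hcol ?_
    have := ofReal_ne_zero.mpr (Real.sin_natCast_mul_pi_div_pos (M := 2 ^ (l + 1 + 1))
      (k := 2 * j + 1) (by omega) (by omega)).ne'
    rw [← hδ, ZMod.stdAddChar_one, ofReal_div, ofReal_one]
    field_simp

/-- for `M = 2^λ`-PSK with `k ∈ {1, …, M/2 − 1}` odd and
`s = sin(kπ/M)·exp(iπ/M)` or `s = (1/sin(kπ/M))·exp(iπ/M)`, the vital subgraph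
is 4-colorable. -/
theorem psk_vital_colorable_four_sin_odd (lam M k : ℕ) (hlam : 3 ≤ lam)
    (hM : M = 2 ^ lam) (hk1 : 1 ≤ k) (hk2 : k ≤ M / 2 - 1) (hkodd : k % 2 = 1)
    (s : ℂ)
    (hs : s = ((Real.sin (k * Real.pi / M) : ℝ) : ℂ) *
            Complex.exp (Complex.I * (Real.pi : ℂ) / (M : ℂ)) ∨
          s = ((1 / Real.sin (k * Real.pi / M) : ℝ) : ℂ) *
            Complex.exp (Complex.I * (Real.pi : ℂ) / (M : ℂ))) :
    (vital M (PSK M) s).Colorable 4 :=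
  psk_vital_colorable_four_sin_odd_general lam M k hM hk2 hkodd s hs
end
end

section
/- Let M = 2^λ with λ ≥ 3, let S be the M-PSK signal set, let k = 2^m·a₁ ∈ {1,…,M/2−1} with m ≥ 1 and a₁ odd, and let s = sin(kπ/M) or s = 1/sin(kπ/M). Then the vital subgraph G_s^V of the singularity removal graph G_s admits a proper vertex coloring with 4 colors (it is 4-colorable). -/
noncomputable section

/-!
Write `ζ = exp (2πi / M)`, `M = 2n` and `k = 2K`, so that `PSK M a = exp (πi / M) ζ^a`,
`i = ζ^(n/2)` and `2i ζ^K sin (kπ / M) = ζ^k - 1`. Multiplying a relation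
`S a + s S b = S a' + s S b'` (`s = sin (kπ / M)`) by `2i ζ^K exp (-πi / M)` turns it into
`2ζ^A - 2ζ^A' + ζ^(b+k) - ζ^b - ζ^(b'+k) + ζ^b' = 0` with `A = a + n/2 + K`, a vanishing sum of
eight `M`-th roots of unity once `-ζ^t` is written as `ζ^(t+n)`. As `X^n + 1` is the minimal
polynomial of `ζ`, such a sum vanishes iff its multiset of exponents is invariant under
`t ↦ t + n`, and a parity argument shows that two distinct related cells `(A, b)`, `(A', b')`
are, in some order, `(β, β)` and `(β + k, β + n)`. Hence every vital class is such a "domino"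
with base `β ∈ ℤ/M`; classes sharing a row have bases differing by `±k`, classes sharing a column
have bases differing by `n`, and bits `m` and `λ - 1` of `β` give a proper 4-coloring.
For `s = 1 / sin (kπ / M)`, transposing the cells reduces to the previous case.
-/

section ShiftInvariant

variable {G : Type*} [AddCommGroup G] {ν : G}

lemma add_eq_iff_eq_add_of_add_self (hνν : ν + ν = 0) {a b : G} : a + ν = b ↔ a = b + ν := by
  constructor <;> rintro rfl <;> simp [add_assoc, hνν]

variable [DecidableEq G]

def IsShiftInvariant (ν : G) (X : Multiset G) : Prop :=
  ∀ t, X.count (t + ν) = X.count t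

lemma IsShiftInvariant.of_add_right {Y Z : Multiset G} (h : IsShiftInvariant ν (Y + Z))
    (hZ : IsShiftInvariant ν Z) : IsShiftInvariant ν Y := fun t => by
  have := h t
  have := hZ t
  simp only [Multiset.count_add] at *
  omega

lemma IsShiftInvariant.of_two_nsmul {Y : Multiset G} (h : IsShiftInvariant ν (2 • Y)) :
    IsShiftInvariant ν Y := fun t => by
  have := h t
  simp only [Multiset.count_nsmul] at this
  omega

lemma IsShiftInvariant.add {Y Z : Multiset G} (hY : IsShiftInvariant ν Y)
    (hZ : IsShiftInvariant ν Z) : IsShiftInvariant ν (Y + Z) := fun t => by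
  simp only [Multiset.count_add, hY t, hZ t]

lemma IsShiftInvariant.count_mod_two {T W : Multiset G} (h : IsShiftInvariant ν (2 • T + W))
    (t : G) : W.count (t + ν) % 2 = W.count t % 2 := by
  have := h t
  simp only [Multiset.count_add, Multiset.count_nsmul] at this
  omega

lemma isShiftInvariant_pair (hνν : ν + ν = 0) (x : G) : IsShiftInvariant ν {x, x + ν} := by
  intro t
  simp only [Multiset.insert_eq_cons, Multiset.count_cons, Multiset.count_singleton,
    add_eq_iff_eq_add_of_add_self hνν, add_assoc, hνν, add_zero]
  omega

lemma IsShiftInvariant.even_card (hν : ν ≠ 0) (hνν : ν + ν = 0) {X : Multiset G}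
    (h : IsShiftInvariant ν X) : Even X.card := by
  induction X using Multiset.strongInductionOn with
  | ih X ih =>
    obtain rfl | ⟨x, hx⟩ := Multiset.empty_or_exists_mem X
    · simp
    have hx' : x + ν ∈ X.erase x := by
      rw [← Multiset.count_pos, Multiset.count_erase_of_ne (by simpa using hν), h x]
      exact Multiset.count_pos.mpr hx
    have hX : X = (X.erase x).erase (x + ν) + {x, x + ν} := by
      rw [add_comm, Multiset.insert_eq_cons, Multiset.cons_add, Multiset.singleton_add,
        Multiset.cons_erase hx', Multiset.cons_erase hx]
    rw [hX] at h ⊢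
    rw [Multiset.card_add]
    refine (ih _ ?_ (h.of_add_right (isShiftInvariant_pair hνν x))).add (by simp)
    exact (Multiset.erase_le _ _).trans_lt (Multiset.erase_lt.mpr hx)

lemma IsShiftInvariant.eq_add_of_pair (hν : ν ≠ 0) {A B : G} (h : IsShiftInvariant ν {A, B}) :
    B = A + ν := by
  by_contra hc
  have := h A
  simp [hν, Ne.symm hc] at this

lemma not_isShiftInvariant_two_nsmul_triple_add_pair (hν : ν ≠ 0) (hνν : ν + ν = 0)
    (A B r x : G) : ¬IsShiftInvariant ν (2 • {A, B, r} + {x, x + ν}) := fun h => by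
  simpa [Nat.even_iff] using
    ((h.of_add_right (isShiftInvariant_pair hνν x)).of_two_nsmul).even_card hν hνν

variable {δ A B p q : G}

-- Parity of the counts at `p` and `p + δ` forces `q ∈ {p, p + ν}` unless `δ + δ = ν`; in that
-- case the multiset splits as an invariant pair plus twice an invariant triple.
lemma IsShiftInvariant.eq_or_eq_add_of_two_nsmul_add (hν : ν ≠ 0) (hνν : ν + ν = 0)
    (hδ : δ + δ ≠ 0) (h : IsShiftInvariant ν (2 • {A, B} + {p, p + δ, q, q + δ})) :
    q = p ∨ q = p + ν := by
  have hδ0 : δ ≠ 0 := by rintro rfl; simp at hδ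
  have hδν : δ ≠ ν := by rintro rfl; exact hδ hνν
  have hδν0 : δ + ν ≠ 0 := fun h' => hδ (by linear_combination (norm := abel) 2 • h' - hνν)
  by_contra! hq
  obtain ⟨hqp, hqpν⟩ := hq
  have hpar := h.count_mod_two
  by_cases hq1 : q = p + δ
  · subst q
    have hδδ : δ + δ = ν := by
      by_contra hc
      have := hpar p
      simp [add_assoc, hν, hδν.symm, hδ0, hδ, Ne.symm hc] at this
    refine not_isShiftInvariant_two_nsmul_triple_add_pair hν hνν A B (p + δ) p ?_
    rw [add_assoc p δ δ, hδδ] at h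
    convert h using 1
    simp only [Multiset.insert_eq_cons, two_nsmul, ← Multiset.singleton_add]
    abel
  by_cases hq2 : q = p + δ + ν
  · subst q
    have hδδ : δ + δ = ν := by
      by_contra hc
      have f0 : p ≠ p + δ + ν := fun e => hδν0 (by linear_combination (norm := abel) -e)
      have f1 : p ≠ p + δ + ν + δ := fun e => hc (by linear_combination (norm := abel) -e - hνν)
      have f2 : p + ν ≠ p + δ + ν + δ := fun e => hδ (by linear_combination (norm := abel) -e)
      have := hpar p
      simp [hν, hδν.symm, hδ0, f0, f1, f2] at this
    refine not_isShiftInvariant_two_nsmul_triple_add_pair hν hνν A B p (p + δ) ?_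
    rw [add_right_comm _ ν δ, add_assoc p δ δ, hδδ, add_assoc p ν ν, hνν, add_zero] at h
    convert h using 1
    simp only [Multiset.insert_eq_cons, two_nsmul, ← Multiset.singleton_add]
    abel
  have f0 : p + δ + ν ≠ p := fun e => hδν0 (by linear_combination (norm := abel) e)
  have f1 : p + δ + ν ≠ q + δ := fun e => hqpν (by linear_combination (norm := abel) -e)
  have := hpar (p + δ)
  simp [hν, hδ0, Ne.symm hq1, Ne.symm hq2, Ne.symm hqp, f0, f1] at this

theorem IsShiftInvariant.two_nsmul_pair_add_cases (hν : ν ≠ 0) (hνν : ν + ν = 0)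
    (hδ : δ + δ ≠ 0) (h : IsShiftInvariant ν (2 • {A, B} + {p, p + δ, q, q + δ})) :
    (B = A + ν ∧ q = p + ν) ∨
      (q = p ∧ (A = p + ν ∧ B = p + δ + ν ∨ A = p + δ + ν ∧ B = p + ν)) := by
  have hδ0 : δ ≠ 0 := by rintro rfl; simp at hδ
  have hδν : δ ≠ ν := by rintro rfl; exact hδ hνν
  have hδν0 : δ + ν ≠ 0 := fun h' => hδ (by linear_combination (norm := abel) 2 • h' - hνν)
  rcases h.eq_or_eq_add_of_two_nsmul_add hν hνν hδ with hq | rfl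
  · subst q
    refine Or.inr ⟨rfl, ?_⟩
    have h1 : p + ν = A ∨ p + ν = B := by
      by_contra! hc
      have := h p
      simp [Multiset.count_cons, Multiset.count_singleton, hν, hδ0, hδν.symm, hc.1, hc.2] at this
    have h2 : p + δ + ν = A ∨ p + δ + ν = B := by
      by_contra! hc
      simp only [add_assoc] at hc
      have := h (p + δ)
      simp [Multiset.count_cons, Multiset.count_singleton, add_assoc, hν, hδ0, hδν0, hc.1,
        hc.2] at this
    have h12 : p + ν ≠ p + δ + ν := by simpa [eq_comm] using hδ0
    rcases h1 with rfl | rfl <;> rcases h2 with h2 | h2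
    · exact absurd h2.symm h12
    · exact Or.inl ⟨rfl, h2.symm⟩
    · exact Or.inr ⟨h2.symm, rfl⟩
    · exact absurd h2.symm h12
  · refine Or.inl ⟨((h.of_add_right ?_).of_two_nsmul).eq_add_of_pair hν, rfl⟩
    convert (isShiftInvariant_pair hνν p).add (isShiftInvariant_pair hνν (p + δ)) using 1
    rw [add_right_comm p ν δ]
    simp only [Multiset.insert_eq_cons, ← Multiset.singleton_add]
    abel

end ShiftInvariant

section RootsOfUnity

open Finset Polynomial

theorem IsPrimitiveRoot.linearIndependent_pow_totient {K : Type*} [Field K] [CharZero K] {ζ : K}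
    {N : ℕ} (hζ : IsPrimitiveRoot ζ N) (hN : 0 < N) :
    LinearIndependent ℚ fun j : Fin N.totient => ζ ^ (j : ℕ) := by
  have := linearIndependent_pow (K := ℚ) ζ
  rwa [← cyclotomic_eq_minpoly_rat hζ hN, natDegree_cyclotomic] at this

variable {l : ℕ}

theorem IsPrimitiveRoot.eq_zero_of_sum_range_two_pow_eq_zero {K : Type*} [Field K] [CharZero K]
    {ζ : K} (hζ : IsPrimitiveRoot ζ (2 ^ (l + 1))) {r : ℕ → ℤ}
    (h : ∑ j ∈ range (2 ^ l), (r j : K) * ζ ^ j = 0) {j : ℕ} (hj : j < 2 ^ l) : r j = 0 := by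
  have li := hζ.linearIndependent_pow_totient (by positivity)
  rw [Nat.totient_prime_pow_succ Nat.prime_two, Nat.add_one_sub_one, mul_one] at li
  have := Fintype.linearIndependent_iff.mp li (fun i => (r i : ℚ))
    (by rw [← h, ← Fin.sum_univ_eq_sum_range]; simp [Rat.smul_def]) ⟨j, hj⟩
  exact_mod_cast this

lemma ZMod.isPrimitiveRoot_stdAddChar_one (N : ℕ) [NeZero N] :
    IsPrimitiveRoot (ZMod.stdAddChar (1 : ZMod N)) N := by
  convert Complex.isPrimitiveRoot_exp N (NeZero.ne N) using 1
  simpa using ZMod.stdAddChar_coe (N := N) 1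

lemma ZMod.natCast_two_pow_add_self_s13 :
    ((2 ^ l : ℕ) : ZMod (2 ^ (l + 1))) + (2 ^ l : ℕ) = 0 := by
  rw [← Nat.cast_add, ← two_mul, ← pow_succ', ZMod.natCast_self]

lemma ZMod.stdAddChar_natCast_two_pow :
    ZMod.stdAddChar ((2 ^ l : ℕ) : ZMod (2 ^ (l + 1))) = -1 := by
  rw [ZMod.stdAddChar_apply, ZMod.toCircle_natCast, ← Complex.exp_pi_mul_I]
  congr 1
  push_cast
  field_simp
  ring

lemma ZMod.stdAddChar_add_two_pow (t : ZMod (2 ^ (l + 1))) :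
    ZMod.stdAddChar (t + ((2 ^ l : ℕ) : ZMod (2 ^ (l + 1)))) = -ZMod.stdAddChar t := by
  rw [AddChar.map_add_eq_mul, ZMod.stdAddChar_natCast_two_pow, mul_neg_one]

theorem sum_map_stdAddChar_eq_sum_range (X : Multiset (ZMod (2 ^ (l + 1)))) :
    (X.map ZMod.stdAddChar).sum = ∑ j ∈ range (2 ^ l),
      (((X.count (j : ZMod (2 ^ (l + 1))) : ℤ) -
        X.count ((j : ZMod (2 ^ (l + 1))) + (2 ^ l : ℕ)) : ℤ) : ℂ) *
        ZMod.stdAddChar (1 : ZMod (2 ^ (l + 1))) ^ j := by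
  rw [Finset.sum_multiset_map_count, Finset.sum_subset (Finset.subset_univ _)
    (fun t _ ht => by rw [Multiset.count_eq_zero.mpr (by simpa using ht), zero_smul])]
  rw [Finset.sum_nbij' (t := range (2 ^ (l + 1))) (fun t => t.val) (fun j => (j : ZMod _))
    (fun t _ => Finset.mem_range.mpr t.val_lt) (fun _ _ => Finset.mem_univ _)
    (fun t _ => ZMod.natCast_zmod_val t) (fun j hj => ZMod.val_cast_of_lt (Finset.mem_range.mp hj))
    (fun t _ => by rw [ZMod.natCast_zmod_val])
    (g := fun j => X.count (j : ZMod _) • ZMod.stdAddChar (j : ZMod (2 ^ (l + 1))))]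
  rw [show range (2 ^ (l + 1)) = range (2 ^ l + 2 ^ l) by rw [pow_succ, mul_two],
    Finset.sum_range_add, ← Finset.sum_add_distrib]
  refine Finset.sum_congr rfl fun j _ => ?_
  rw [show ((2 ^ l + j : ℕ) : ZMod (2 ^ (l + 1))) = j + (2 ^ l : ℕ) by push_cast; ring,
    ZMod.stdAddChar_add_two_pow, ← AddChar.map_nsmul_eq_pow, nsmul_one]
  push_cast
  ring

theorem isShiftInvariant_of_sum_stdAddChar_eq_zero {X : Multiset (ZMod (2 ^ (l + 1)))}
    (h : (X.map ZMod.stdAddChar).sum = 0) :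
    IsShiftInvariant ((2 ^ l : ℕ) : ZMod (2 ^ (l + 1))) X := by
  have hr {j : ℕ} (hj : j < 2 ^ l) :=
    (ZMod.isPrimitiveRoot_stdAddChar_one _).eq_zero_of_sum_range_two_pow_eq_zero
      ((sum_map_stdAddChar_eq_sum_range X).symm.trans h) hj
  intro t
  obtain ⟨j, hj, rfl | rfl⟩ :
      ∃ j : ℕ, j < 2 ^ l ∧ (t = j ∨ t = j + ((2 ^ l : ℕ) : ZMod (2 ^ (l + 1)))) := by
    rcases lt_or_ge t.val (2 ^ l) with ht | ht
    · exact ⟨t.val, ht, Or.inl (ZMod.natCast_zmod_val t).symm⟩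
    · have : t.val < 2 ^ l * 2 := pow_succ 2 l ▸ t.val_lt
      refine ⟨t.val - 2 ^ l, by omega, Or.inr ?_⟩
      rw [← Nat.cast_add, Nat.sub_add_cancel ht, ZMod.natCast_zmod_val]
  · have := hr hj
    omega
  · have := hr hj
    rw [add_assoc, ZMod.natCast_two_pow_add_self_s13, add_zero]
    omega

end RootsOfUnity

lemma ZMod.testBit_val_add_two_pow_mul {l m a : ℕ} (hm : m ≤ l) (ha : a % 2 = 1)
    (z : ZMod (2 ^ (l + 1))) :
    (z + ((2 ^ m * a : ℕ) : ZMod (2 ^ (l + 1)))).val.testBit m = !z.val.testBit m := by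
  have hdvd : 2 ^ (m + 1) ∣ 2 ^ (l + 1) := pow_dvd_pow 2 (by omega)
  have low (x : ℕ) : x.testBit m = (x % 2 ^ (m + 1)).testBit m := by
    simp [Nat.testBit_mod_two_pow]
  rw [low, ZMod.val_add, ZMod.val_natCast, Nat.mod_mod_of_dvd _ hdvd, Nat.add_mod,
    Nat.mod_mod_of_dvd _ hdvd, ← Nat.add_mod, ← low, Nat.testBit_eq_decide_div_mod_eq,
    Nat.testBit_eq_decide_div_mod_eq, Nat.add_mul_div_left _ _ (by positivity)]
  rcases Nat.mod_two_eq_zero_or_one (z.val / 2 ^ m) with h | h <;> simp [Nat.add_mod, h, ha]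

section VitalColoring

variable {M : ℕ} {S : Fin M → ℂ} {s : ℂ}

def IsVitalCell (M : ℕ) (S : Fin M → ℂ) (s : ℂ) (c : Fin M × Fin M) : Prop :=
  ∃ c', c' ≠ c ∧ fadeSetoid M S s c c'

structure IsVitalColoring (M : ℕ) (S : Fin M → ℂ) (s : ℂ) {C : Type*}
    (f : Fin M × Fin M → C) : Prop where
  eq_of_rel : ∀ c c', fadeSetoid M S s c c' → f c = f c'
  ne_of_adj : ∀ c d, IsVitalCell M S s c → IsVitalCell M S s d → ¬fadeSetoid M S s c d →
    (c.1 = d.1 ∨ c.2 = d.2) → f c ≠ f d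

lemma isVitalCell_of_mem_vitalSet {u : Quotient (fadeSetoid M S s)} (hu : u ∈ vitalSet M S s)
    {c : Fin M × Fin M} (hc : Quotient.mk _ c = u) : IsVitalCell M S s c := by
  obtain ⟨p, q, hpq, rfl, hq⟩ := hu
  by_cases hp : p = c
  · exact ⟨q, hp ▸ hpq.symm, Quotient.exact (hc.trans hq.symm)⟩
  · exact ⟨p, hp, Quotient.exact hc⟩

theorem IsVitalColoring.colorable {C : Type*} [Fintype C] {f : Fin M × Fin M → C}
    (hf : IsVitalColoring M S s f) : (vital M S s).Colorable (Fintype.card C) := by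
  refine SimpleGraph.Coloring.colorable
    (SimpleGraph.Coloring.mk (fun u => Quotient.lift f hf.eq_of_rel u.1) ?_)
  rintro ⟨u, hu⟩ ⟨v, hv⟩ ⟨hne, c, d, rfl, rfl, hcd⟩
  exact hf.ne_of_adj c d (isVitalCell_of_mem_vitalSet hu rfl) (isVitalCell_of_mem_vitalSet hv rfl)
    (fun h => hne (Quotient.sound h)) hcd

lemma fadeSetoid_inv_iff (hs : s ≠ 0) (c c' : Fin M × Fin M) :
    fadeSetoid M S s⁻¹ c c' ↔ fadeSetoid M S s c.swap c'.swap := by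
  change S c.1 + s⁻¹ * S c.2 = S c'.1 + s⁻¹ * S c'.2 ↔
    S c.2 + s * S c.1 = S c'.2 + s * S c'.1
  constructor <;> intro h
  · field_simp at h
    linear_combination h
  · field_simp
    linear_combination h

theorem IsVitalColoring.comp_swap (hs : s ≠ 0) {C : Type*} {f : Fin M × Fin M → C}
    (hf : IsVitalColoring M S s f) : IsVitalColoring M S s⁻¹ (f ∘ Prod.swap) where
  eq_of_rel c c' h := hf.eq_of_rel _ _ ((fadeSetoid_inv_iff hs c c').mp h)
  ne_of_adj c d := by
    rintro ⟨c', hc', hcc'⟩ ⟨d', hd', hdd'⟩ hcd hshare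
    refine hf.ne_of_adj _ _ ⟨c'.swap, by simpa using hc', (fadeSetoid_inv_iff hs _ _).mp hcc'⟩
      ⟨d'.swap, by simpa using hd', (fadeSetoid_inv_iff hs _ _).mp hdd'⟩
      (fun h => hcd ((fadeSetoid_inv_iff hs _ _).mpr h)) hshare.symm

end VitalColoring

section Dominoes

variable {G : Type*} [AddCommGroup G] {κ ν : G}

lemma apply_ne_apply_of_eq_or_eq_add {C : Type*} {χ : G → C} {η : G}
    (hχ : ∀ x, χ (x + η) ≠ χ x) {x β γ : G} (hβ : x = β ∨ x = β + η) (hγ : x = γ ∨ x = γ + η)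
    (hne : β ≠ γ) : χ β ≠ χ γ := by
  rcases hβ with rfl | rfl <;> rcases hγ with h | h
  · exact absurd h hne
  · rw [h]; exact hχ γ
  · rw [← h]; exact (hχ β).symm
  · exact absurd (add_right_cancel h) hne

def IsDominoCell (κ ν β : G) (P : G × G) : Prop :=
  P = (β, β) ∨ P = (β + κ, β + ν)

lemma IsDominoCell.fst {β : G} {P : G × G} (h : IsDominoCell κ ν β P) : P.1 = β ∨ P.1 = β + κ :=
  h.imp (congrArg Prod.fst) (congrArg Prod.fst)

lemma IsDominoCell.snd {β : G} {P : G × G} (h : IsDominoCell κ ν β P) : P.2 = β ∨ P.2 = β + ν :=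
  h.imp (congrArg Prod.snd) (congrArg Prod.snd)

variable [DecidableEq G]

def dominoBase (ν : G) (P : G × G) : G :=
  if P.1 = P.2 then P.2 else P.2 + ν

lemma IsDominoCell.dominoBase_eq (hνν : ν + ν = 0) (hκν : κ ≠ ν) {β : G} {P : G × G}
    (h : IsDominoCell κ ν β P) : dominoBase ν P = β := by
  rcases h with rfl | rfl
  · exact if_pos rfl
  · rw [dominoBase, if_neg (by simpa using hκν), add_assoc, hνν, add_zero]

variable {M : ℕ} {S : Fin M → ℂ} {s : ℂ}

theorem isVitalColoring_of_isDominoCell (hνν : ν + ν = 0) (hκν : κ ≠ ν) {f₁ f₂ : Fin M → G}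
    (hf₁ : Function.Injective f₁) (hf₂ : Function.Injective f₂)
    (hdom : ∀ c c', fadeSetoid M S s c c' → c ≠ c' → ∃ β,
      IsDominoCell κ ν β (f₁ c.1, f₂ c.2) ∧ IsDominoCell κ ν β (f₁ c'.1, f₂ c'.2))
    {C : Type*} {χ : G → C} (hχκ : ∀ x, χ (x + κ) ≠ χ x) (hχν : ∀ x, χ (x + ν) ≠ χ x) :
    IsVitalColoring M S s fun c => χ (dominoBase ν (f₁ c.1, f₂ c.2)) := by
  set φ : Fin M × Fin M → G × G := fun c => (f₁ c.1, f₂ c.2)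
  have hφ : Function.Injective φ := fun c d h =>
    Prod.ext (hf₁ (congrArg Prod.fst h)) (hf₂ (congrArg Prod.snd h))
  have hvital : ∀ c, IsVitalCell M S s c → ∃ c', c' ≠ c ∧ fadeSetoid M S s c c' ∧
      IsDominoCell κ ν (dominoBase ν (φ c)) (φ c) ∧
      IsDominoCell κ ν (dominoBase ν (φ c)) (φ c') := by
    rintro c ⟨c', hne, hrel⟩
    obtain ⟨β, hc, hc'⟩ := hdom c c' hrel hne.symm
    rw [hc.dominoBase_eq hνν hκν]
    exact ⟨c', hne, hrel, hc, hc'⟩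
  constructor
  · intro c c' hrel
    obtain rfl | hne := eq_or_ne c c'
    · rfl
    obtain ⟨β, hc, hc'⟩ := hdom c c' hrel hne
    simp only [hc.dominoBase_eq hνν hκν, hc'.dominoBase_eq hνν hκν]
  · intro c d hc hd hcd hshare
    obtain ⟨c', hc'c, hcc', hc, hc'⟩ := hvital c hc
    obtain ⟨-, -, -, hd, -⟩ := hvital d hd
    have hβγ : dominoBase ν (φ c) ≠ dominoBase ν (φ d) := by
      intro hβγ
      rw [← hβγ] at hd
      have : φ d = φ c ∨ φ d = φ c' := by
        rcases hc with h1 | h1 <;> rcases hc' with h2 | h2 <;> rcases hd with h3 | h3 <;>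
          first
            | exact absurd (hφ (h2.trans h1.symm)) hc'c
            | exact Or.inl (h3.trans h1.symm)
            | exact Or.inr (h3.trans h2.symm)
      rcases this with h | h <;> obtain rfl := hφ h
      · exact hcd ((fadeSetoid M S s).refl d)
      · exact hcd hcc'
    rcases hshare with h | h
    · have hrow : (φ c).1 = (φ d).1 := congrArg f₁ h
      exact apply_ne_apply_of_eq_or_eq_add hχκ hc.fst (hrow ▸ hd.fst) hβγ
    · have hcol : (φ c).2 = (φ d).2 := congrArg f₂ h
      exact apply_ne_apply_of_eq_or_eq_add hχν hc.snd (hcol ▸ hd.snd) hβγ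

end Dominoes

section PSKSin

open Complex Real

variable {l Q K k : ℕ}

lemma PSK_eq_exp_mul_stdAddChar (a : Fin (2 ^ (l + 1))) :
    PSK (2 ^ (l + 1)) a =
      exp (π * I / (2 ^ (l + 1) : ℕ)) * ZMod.stdAddChar ((a : ℕ) : ZMod (2 ^ (l + 1))) := by
  rw [PSK, ZMod.stdAddChar_apply, ZMod.toCircle_natCast, ← Complex.exp_add]
  congr 1
  push_cast
  ring

lemma ZMod.stdAddChar_natCast_eq_I (hQ : 4 * Q = 2 ^ (l + 1)) :
    ZMod.stdAddChar ((Q : ℕ) : ZMod (2 ^ (l + 1))) = I := by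
  have hQ0 : (Q : ℂ) ≠ 0 := by
    norm_cast
    rintro rfl
    exact pow_ne_zero (l + 1) two_ne_zero (by simpa using hQ.symm)
  rw [ZMod.stdAddChar_apply, ZMod.toCircle_natCast]
  convert Complex.exp_pi_div_two_mul_I using 2
  rw [← hQ]
  push_cast
  field_simp
  ring

lemma ofReal_sin_eq_stdAddChar (hK : 2 * K = k) :
    ((Real.sin (k * π / (2 ^ (l + 1) : ℕ)) : ℝ) : ℂ) =
      ((ZMod.stdAddChar ((K : ℕ) : ZMod (2 ^ (l + 1))))⁻¹ -
        ZMod.stdAddChar ((K : ℕ) : ZMod (2 ^ (l + 1)))) * I / 2 := by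
  rw [ofReal_sin, Complex.sin, ZMod.stdAddChar_apply, ZMod.toCircle_natCast, ← Complex.exp_neg,
    ← hK]
  congr 4 <;> push_cast <;> ring

lemma ZMod.natCast_ne_zero_of_lt {N x : ℕ} (hx : 0 < x) (hxN : x < N) : (x : ZMod N) ≠ 0 :=
  fun h => Nat.not_dvd_of_pos_of_lt hx hxN ((ZMod.natCast_eq_zero_iff x N).mp h)

lemma Fin.natCast_injective_zmod {N : ℕ} :
    Function.Injective fun a : Fin N => ((a : ℕ) : ZMod N) := fun a b h => by
  simpa [ZMod.natCast_eq_natCast_iff', Nat.mod_eq_of_lt a.2, Nat.mod_eq_of_lt b.2, Fin.ext_iff]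
    using h

theorem sum_map_stdAddChar_eq_zero_of_psk_sin (hQ : 4 * Q = 2 ^ (l + 1)) (hK : 2 * K = k)
    {a b a' b' : Fin (2 ^ (l + 1))}
    (h : PSK _ a + ((Real.sin (k * π / (2 ^ (l + 1) : ℕ)) : ℝ) : ℂ) * PSK _ b =
      PSK _ a' + ((Real.sin (k * π / (2 ^ (l + 1) : ℕ)) : ℝ) : ℂ) * PSK _ b') :
    let x : Fin (2 ^ (l + 1)) → ZMod (2 ^ (l + 1)) := fun a => (a : ℕ)
    let ν : ZMod (2 ^ (l + 1)) := (2 ^ l : ℕ)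
    let κ : ZMod (2 ^ (l + 1)) := (k : ℕ)
    ((2 • {x a + Q + K, x a' + Q + K + ν} + {x b + ν, x b + ν + (κ + ν), x b', x b' + (κ + ν)} :
      Multiset (ZMod (2 ^ (l + 1)))).map ZMod.stdAddChar).sum = 0 := by
  intro x ν κ
  have hkK : ((k : ℕ) : ZMod (2 ^ (l + 1))) = (K : ℕ) + (K : ℕ) := by rw [← hK]; push_cast; ring
  have hFE : ZMod.stdAddChar (-((K : ℕ) : ZMod (2 ^ (l + 1)))) *
      ZMod.stdAddChar ((K : ℕ) : ZMod (2 ^ (l + 1))) = 1 := by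
    rw [← AddChar.map_add_eq_mul, neg_add_cancel, AddChar.map_zero_eq_one]
  simp only [PSK_eq_exp_mul_stdAddChar, ofReal_sin_eq_stdAddChar hK,
    ← AddChar.map_neg_eq_inv] at h
  simp only [Multiset.map_add, Multiset.map_nsmul, Multiset.sum_add, Multiset.sum_nsmul,
    Multiset.insert_eq_cons, Multiset.map_cons, Multiset.map_singleton, Multiset.sum_cons,
    Multiset.sum_singleton, x, ν, κ, hkK, AddChar.map_add_eq_mul, ZMod.stdAddChar_natCast_two_pow,
    ZMod.stdAddChar_natCast_eq_I hQ]
  set ρ := exp (π * I / (2 ^ (l + 1) : ℕ))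
  set E := ZMod.stdAddChar ((K : ℕ) : ZMod (2 ^ (l + 1)))
  set F := ZMod.stdAddChar (-((K : ℕ) : ZMod (2 ^ (l + 1))))
  set y := ZMod.stdAddChar ((b : ℕ) : ZMod (2 ^ (l + 1)))
  set y' := ZMod.stdAddChar ((b' : ℕ) : ZMod (2 ^ (l + 1)))
  refine mul_left_cancel₀ (exp_ne_zero (π * I / (2 ^ (l + 1) : ℕ))) ?_
  -- `2 i E sin (kπ / M) = i² E (F - E) = E² - 1`, using `i² = -1` and `F E = 1`
  linear_combination 2 * I * E * h + ρ * (y - y') * (E ^ 2 - E * F) * I_sq + ρ * (y - y') * hFE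

theorem psk_sin_isDominoCell (hQ : 4 * Q = 2 ^ (l + 1)) (hK : 2 * K = k) (hk : 0 < k)
    (hkl : k < 2 ^ l) {c c' : Fin (2 ^ (l + 1)) × Fin (2 ^ (l + 1))}
    (h : fadeSetoid (2 ^ (l + 1)) (PSK (2 ^ (l + 1)))
      ((Real.sin (k * π / (2 ^ (l + 1) : ℕ)) : ℝ) : ℂ) c c') (hne : c ≠ c') :
    ∃ β, IsDominoCell (k : ZMod (2 ^ (l + 1))) ((2 ^ l : ℕ) : ZMod (2 ^ (l + 1))) β
        (((c.1 : ℕ) : ZMod (2 ^ (l + 1))) + Q + K, (c.2 : ℕ)) ∧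
      IsDominoCell (k : ZMod (2 ^ (l + 1))) ((2 ^ l : ℕ) : ZMod (2 ^ (l + 1))) β
        (((c'.1 : ℕ) : ZMod (2 ^ (l + 1))) + Q + K, (c'.2 : ℕ)) := by
  have hsum := sum_map_stdAddChar_eq_zero_of_psk_sin hQ hK h
  dsimp only at hsum
  have hinv := isShiftInvariant_of_sum_stdAddChar_eq_zero hsum
  set ν : ZMod (2 ^ (l + 1)) := ((2 ^ l : ℕ) : ZMod (2 ^ (l + 1)))
  set κ : ZMod (2 ^ (l + 1)) := ((k : ℕ) : ZMod (2 ^ (l + 1))) with hκ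
  set u : ZMod (2 ^ (l + 1)) := ((c.1 : ℕ) : ZMod (2 ^ (l + 1))) + Q + K with hu
  set u' : ZMod (2 ^ (l + 1)) := ((c'.1 : ℕ) : ZMod (2 ^ (l + 1))) + Q + K with hu'
  set v : ZMod (2 ^ (l + 1)) := ((c.2 : ℕ) : ZMod (2 ^ (l + 1))) with hv
  set v' : ZMod (2 ^ (l + 1)) := ((c'.2 : ℕ) : ZMod (2 ^ (l + 1))) with hv'
  have hνν : ν + ν = 0 := ZMod.natCast_two_pow_add_self_s13
  have hν : ν ≠ 0 :=
    ZMod.natCast_ne_zero_of_lt (by positivity) (Nat.pow_lt_pow_right one_lt_two (by omega))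
  have hδ : κ + ν + (κ + ν) ≠ 0 := by
    rw [show κ + ν + (κ + ν) = ((2 * k : ℕ) : ZMod _) by
      rw [hκ]; push_cast; linear_combination hνν]
    exact ZMod.natCast_ne_zero_of_lt (by omega) (by rw [pow_succ]; omega)
  rcases hinv.two_nsmul_pair_add_cases hν hνν hδ with ⟨hB, hq⟩ | ⟨hq, ⟨hA, hB⟩ | ⟨hA, hB⟩⟩
  · refine absurd (Prod.ext (Fin.natCast_injective_zmod ?_) (Fin.natCast_injective_zmod ?_)) hne
    · linear_combination -hB + hu' - hu
    · linear_combination -hq + hv' - hv - hνν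
  · exact ⟨v, Or.inl (Prod.ext (by linear_combination hA + hνν) rfl),
      Or.inr (Prod.ext (by linear_combination hB + hνν) hq)⟩
  · exact ⟨v + ν, Or.inr (Prod.ext (by linear_combination hA + hνν) (by linear_combination -hνν)),
      Or.inl (Prod.ext (by linear_combination hB) hq)⟩

theorem exists_isVitalColoring_psk_sin {l m k a₁ : ℕ} (hm : 1 ≤ m) (ha₁ : a₁ % 2 = 1)
    (hk : k = 2 ^ m * a₁) (hkl : k < 2 ^ l) :
    ∃ f : Fin (2 ^ (l + 1)) × Fin (2 ^ (l + 1)) → Bool × Bool, IsVitalColoring (2 ^ (l + 1))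
      (PSK (2 ^ (l + 1))) ((Real.sin (k * π / (2 ^ (l + 1) : ℕ)) : ℝ) : ℂ) f := by
  have hmk : 2 ^ m ≤ k := hk ▸ Nat.le_mul_of_pos_right _ (by omega)
  have hml : m < l := (Nat.pow_lt_pow_iff_right one_lt_two).mp (hmk.trans_lt hkl)
  have hk0 : 0 < k := (Nat.two_pow_pos m).trans_le hmk
  obtain ⟨K, hK⟩ : ∃ K, 2 * K = k :=
    ⟨2 ^ (m - 1) * a₁, by rw [hk, ← mul_assoc, ← pow_succ', Nat.sub_add_cancel hm]⟩
  obtain ⟨Q, hQ⟩ : ∃ Q, 4 * Q = 2 ^ (l + 1) :=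
    ⟨2 ^ (l - 1), by rw [show 4 = 2 ^ 2 by rfl, ← pow_add]; congr 1; omega⟩
  have hκν : ((k : ℕ) : ZMod (2 ^ (l + 1))) ≠ ((2 ^ l : ℕ) : ZMod (2 ^ (l + 1))) := by
    rw [Ne, ZMod.natCast_eq_natCast_iff', Nat.mod_eq_of_lt (by rw [pow_succ]; omega),
      Nat.mod_eq_of_lt (Nat.pow_lt_pow_right one_lt_two (by omega))]
    omega
  refine ⟨_, isVitalColoring_of_isDominoCell ZMod.natCast_two_pow_add_self_s13 hκν
    (f₁ := fun a => ((a : ℕ) : ZMod (2 ^ (l + 1))) + Q + K) (f₂ := fun b => (b : ℕ))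
    ((add_left_injective _).comp ((add_left_injective _).comp Fin.natCast_injective_zmod))
    Fin.natCast_injective_zmod (fun c c' h hne => psk_sin_isDominoCell hQ hK hk0 hkl h hne)
    (χ := fun z => (z.val.testBit m, z.val.testBit l)) ?_ ?_⟩
  · intro x h
    rw [Prod.mk.injEq, hk, ZMod.testBit_val_add_two_pow_mul hml.le ha₁] at h
    exact Bool.not_ne_self _ h.1
  · intro x h
    rw [Prod.mk.injEq, ← mul_one (2 ^ l), ZMod.testBit_val_add_two_pow_mul le_rfl rfl] at h
    exact Bool.not_ne_self _ h.2

end PSKSin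

theorem psk_vital_colorable_four_sin_even_general (lam M m k a₁ : ℕ)
    (hM : M = 2 ^ lam) (hm : 1 ≤ m) (ha₁ : a₁ % 2 = 1) (hk : k = 2 ^ m * a₁)
    (hk2 : k ≤ M / 2 - 1) (s : ℂ)
    (hs : s = ((Real.sin (k * Real.pi / M) : ℝ) : ℂ) ∨
          s = ((1 / Real.sin (k * Real.pi / M) : ℝ) : ℂ)) :
    (vital M (PSK M) s).Colorable 4 := by
  have hk0 : 0 < k := hk ▸ Nat.mul_pos (by positivity) (by omega)
  obtain _ | l := lam
  · subst hM
    omega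
  subst hM
  have hkl : k < 2 ^ l := by
    rw [pow_succ, Nat.mul_div_cancel _ two_pos] at hk2
    omega
  obtain ⟨f, hf⟩ := exists_isVitalColoring_psk_sin hm ha₁ hk hkl
  rcases hs with rfl | rfl
  · simpa using hf.colorable
  · have hsin : 0 < Real.sin (k * Real.pi / (2 ^ (l + 1) : ℕ)) := by
      apply Real.sin_pos_of_pos_of_lt_pi (by positivity)
      rw [div_lt_iff₀ (by positivity)]
      have : (k : ℝ) < (2 ^ (l + 1) : ℕ) := by exact_mod_cast (by rw [pow_succ]; omega)
      nlinarith [Real.pi_pos]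
    rw [one_div, Complex.ofReal_inv]
    simpa using (hf.comp_swap (Complex.ofReal_ne_zero.mpr hsin.ne')).colorable

/-- for `M = 2^λ`-PSK with `k = 2^m a₁ ∈ {1, …, M/2 − 1}`
(`m ≥ 1`, `a₁` odd) and `s = sin(kπ/M)` or `s = 1/sin(kπ/M)`, the vital
subgraph is 4-colorable. -/
theorem psk_vital_colorable_four_sin_even (lam M m k a₁ : ℕ) (hlam : 3 ≤ lam)
    (hM : M = 2 ^ lam) (hm : 1 ≤ m) (ha₁ : a₁ % 2 = 1) (hk : k = 2 ^ m * a₁)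
    (hk1 : 1 ≤ k) (hk2 : k ≤ M / 2 - 1) (s : ℂ)
    (hs : s = ((Real.sin (k * Real.pi / M) : ℝ) : ℂ) ∨
          s = ((1 / Real.sin (k * Real.pi / M) : ℝ) : ℂ)) :
    (vital M (PSK M) s).Colorable 4 :=
  psk_vital_colorable_four_sin_even_general lam M m k a₁ hM hm ha₁ hk hk2 s hs
end
end
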